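/- Let p ∈ (0,1), q = 1-p, and n ≤ N/2 + 1. Then the nth Krawtchouk polynomial satisfies for all real x ∈ [0,N]: |k_n(x,p,N)| ≤ max{1, (q/p)^n}, and moreover max{1,(q/p)^n} = max{|k_n(0,p,N)|, |k_n(N,p,N)|}. -/

import Mathlib

open Finset

noncomputable def poch (a : ℝ) (k : ℕ) : ℝ := ∏ i ∈ Finset.range k, (a + i)

noncomputable def hahnQ (n : ℕ) (x α β : ℝ) (N : ℕ) : ℝ :=
  ∑ k ∈ Finset.range (n + 1),
    poch (-(n : ℝ)) k * poch ((n : ℝ) + α + β + 1) k * poch (-x) k /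
      ((Nat.factorial k : ℝ) * poch (α + 1) k * poch (-(N : ℝ)) k)

noncomputable def binomR (a b : ℝ) : ℝ :=
  Real.Gamma (a + 1) / (Real.Gamma (b + 1) * Real.Gamma (a - b + 1))

noncomputable def hahnWeight (x : ℕ) (α β : ℝ) (N : ℕ) : ℝ :=
  binomR ((x : ℝ) + α) (x : ℝ) * binomR ((N : ℝ) - x + β) ((N : ℝ) - x) /
    binomR ((N : ℝ) + α + β + 1) (N : ℝ)

noncomputable def hahnPi (n : ℕ) (α β : ℝ) (N : ℕ) : ℝ :=
  ((-1 : ℝ) ^ n * poch (-(N : ℝ)) n * poch (α + 1) n * poch (α + β + 1) n) /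
      ((Nat.factorial n : ℝ) * poch ((N : ℝ) + α + β + 2) n * poch (β + 1) n) *
    ((2 * (n : ℝ) + α + β + 1) / (α + β + 1))

noncomputable def kraw (n : ℕ) (x p : ℝ) (N : ℕ) : ℝ :=
  ∑ k ∈ Finset.range (n + 1),
    poch (-(n : ℝ)) k * poch (-x) k / ((Nat.factorial k : ℝ) * poch (-(N : ℝ)) k) * (1 / p) ^ k

noncomputable def dualR (n : ℕ) (lam α β : ℝ) (N : ℕ) : ℝ :=
  ∑ k ∈ Finset.range (n + 1),
    poch (-(n : ℝ)) k * (∏ i ∈ Finset.range k, ((i : ℝ) * (α + β + 1 + i) - lam)) /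
      ((Nat.factorial k : ℝ) * poch (α + 1) k * poch (-(N : ℝ)) k)

noncomputable def ktil (l : ℕ) (x p : ℝ) (N : ℕ) : ℝ :=
  (N.choose l : ℝ) * (p / (1 - p)) ^ l * kraw l x p N


/-!
Write `w = (1 - p) / p`; the bound is proved by induction on `n`, splitting `[0, N]` into
`[0, 1]`, `[1, N - 1]` and `[N - 1, N]`.

On `[1, N - 1]` the contiguous relation
`(N + 1) K_{n+1}(x; N + 1) = (N + 1 - x) K_n(x; N) - w x K_n(x - 1; N)` has nonnegative weights with
`(N + 1 - x) + w x ≤ (N + 1) max 1 w`, so the bound for `n` gives the one for `n + 1`.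

On `[0, 1]`, with the decreasing sequence `P_k = (1 - x)_k / k!`, Pascal's rule
`(-x)_{k+1} / (k+1)! = P_{k+1} - P_k` turns the defining sum into
`K_n(x) = 1 - ∑_k τ_{k+1} (P_k - P_{k+1})`, `τ_k = (n.descFactorial k / N.descFactorial k) p⁻ᵏ ≥ 0`.
Hence `K_n ≤ 1`. Of the weights `P_k - P_{k+1} ≥ 0` the first is `x` and the others add up to
`P_1 - P_n ≤ (1 - x)(n - 1)/n`, while `2n ≤ N + 2` gives `(n - 1) τ_k ≤ 2n ((1 + w)/2)^k` for
`k ≥ 2`, and convexity of `t ↦ tᵏ` bounds `2 ((1 + w)/2)^k` by `1 + max 1 (wⁿ)`.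
So `K_n ≥ -max 1 (wⁿ)`.

On `[N - 1, N]` the symmetry `K_n(x; p, N) = (-w)ⁿ K_n(N - x; 1 - p, N)` reduces to `[0, 1]`.
-/

open scoped Nat

lemma poch_zero (a : ℝ) : poch a 0 = 1 := prod_range_zero _

lemma poch_succ (a : ℝ) (k : ℕ) : poch a (k + 1) = poch a k * (a + k) := prod_range_succ _ _

lemma poch_succ' (a : ℝ) (k : ℕ) : poch a (k + 1) = a * poch (a + 1) k := by
  simp only [poch, prod_range_succ', Nat.cast_succ, Nat.cast_zero, add_zero]
  rw [mul_comm]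
  congr 1
  exact prod_congr rfl fun i _ => by ring

lemma poch_neg_natCast (n k : ℕ) : poch (-n) k = (-1) ^ k * n.descFactorial k := by
  induction k with
  | zero => simp [poch_zero]
  | succ k ih =>
    rw [poch_succ, ih, Nat.descFactorial_succ, pow_succ]
    rcases le_or_gt k n with hkn | hnk
    · push_cast [hkn]; ring
    · simp [Nat.descFactorial_eq_zero_iff_lt.mpr hnk]

/-- `negChoose x k = (-1) ^ k * (x choose k)`. -/
noncomputable def negChoose (x : ℝ) (k : ℕ) : ℝ := poch (-x) k / k !

lemma negChoose_zero (x : ℝ) : negChoose x 0 = 1 := by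
  simp [negChoose, poch_zero]

lemma succ_mul_negChoose_succ (x : ℝ) (k : ℕ) :
    (k + 1) * negChoose x (k + 1) = (k - x) * negChoose x k := by
  simp only [negChoose, poch_succ, Nat.factorial_succ]
  push_cast
  field_simp
  ring

lemma mul_negChoose_sub_one (x : ℝ) (k : ℕ) :
    x * negChoose (x - 1) k = -((k + 1) * negChoose x (k + 1)) := by
  simp only [negChoose, poch_succ' (-x), Nat.factorial_succ, show -(x - 1) = -x + 1 by ring]
  push_cast
  field_simp

lemma negChoose_contiguous {p : ℝ} (hp : p ≠ 0) (M x : ℝ) (k : ℕ) :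
    (M - x) * negChoose x k - (1 - p) / p * x * negChoose (x - 1) k
      = (M - k) * negChoose x k + (k + 1) / p * negChoose x (k + 1) := by
  have hu : 1 + (1 - p) / p = 1 / p := by
    field_simp
    ring
  linear_combination (-1 : ℝ) * succ_mul_negChoose_succ x k
    + (-((1 - p) / p)) * mul_negChoose_sub_one x k + ((k + 1) * negChoose x (k + 1)) * hu

lemma negChoose_succ (x : ℝ) (k : ℕ) :
    negChoose x (k + 1) = negChoose (x - 1) (k + 1) - negChoose (x - 1) k := by
  have hk : (k : ℝ) + 1 ≠ 0 := by positivity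
  apply mul_left_cancel₀ hk
  linear_combination mul_negChoose_sub_one x k - succ_mul_negChoose_succ (x - 1) k

lemma negChoose_sub_one_one (x : ℝ) : negChoose (x - 1) 1 = 1 - x := by
  simp [negChoose, poch]

lemma negChoose_sub_one_nonneg {x : ℝ} (hx : x ≤ 1) (k : ℕ) : 0 ≤ negChoose (x - 1) k := by
  unfold negChoose poch
  refine div_nonneg (prod_nonneg fun i _ => ?_) (by positivity)
  linarith [(i.cast_nonneg : (0 : ℝ) ≤ i)]

lemma negChoose_sub_one_succ_le {x : ℝ} (hx0 : 0 ≤ x) (hx1 : x ≤ 1) (k : ℕ) :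
    negChoose (x - 1) (k + 1) ≤ negChoose (x - 1) k := by
  have h := mul_negChoose_sub_one x k
  have := mul_nonneg hx0 (negChoose_sub_one_nonneg hx1 k)
  rw [negChoose_succ] at h
  nlinarith

lemma div_le_negChoose_sub_one {x : ℝ} (hx : x ≤ 1) (n : ℕ) :
    (1 - x) / n ≤ negChoose (x - 1) n := by
  rcases n with _ | m
  · simpa using negChoose_sub_one_nonneg hx 0
  have hprod : (m ! : ℝ) ≤ poch (-(x - 1) + 1) m := by
    rw [← prod_range_add_one_eq_factorial, Nat.cast_prod, poch]
    refine prod_le_prod (fun i _ => by positivity) fun i _ => ?_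
    push_cast
    linarith
  rw [negChoose, poch_succ', Nat.factorial_succ, Nat.cast_mul, Nat.cast_succ,
    div_le_div_iff₀ (by positivity) (by positivity)]
  have h1x : 0 ≤ 1 - x := by linarith
  nlinarith [mul_le_mul_of_nonneg_left hprod h1x]

theorem kraw_eq_sum (n : ℕ) (x p : ℝ) (N : ℕ) :
    kraw n x p N = ∑ k ∈ range (n + 1),
      (n.descFactorial k / N.descFactorial k : ℝ) * negChoose x k * (1 / p) ^ k := by
  refine sum_congr rfl fun k _ => ?_
  rw [negChoose, poch_neg_natCast, poch_neg_natCast]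
  have hs : ((-1 : ℝ) ^ k)⁻¹ = (-1) ^ k := by rw [← inv_pow, inv_neg, inv_one]
  simp only [div_eq_mul_inv, mul_inv, hs]
  ring_nf
  rw [Even.neg_one_pow ⟨k, by ring⟩, mul_one]

theorem kraw_zero (x p : ℝ) (N : ℕ) : kraw 0 x p N = 1 := by
  simp [kraw, poch_zero]

theorem kraw_eval_zero (n : ℕ) (p : ℝ) (N : ℕ) : kraw n 0 p N = 1 := by
  rw [kraw, sum_range_succ']
  simp [poch_succ', poch_zero]

theorem kraw_eval_self {n N : ℕ} (hnN : n ≤ N) {p : ℝ} (hp : p ≠ 0) :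
    kraw n N p N = ((p - 1) / p) ^ n := by
  have hterm : ∀ k ∈ range (n + 1), poch (-n) k * poch (-N) k / (k ! * poch (-N) k) * (1 / p) ^ k
      = (-(1 / p)) ^ k * 1 ^ (n - k) * n.choose k := by
    intro k hk
    have hkN : k ≤ N := (Nat.lt_succ_iff.mp (mem_range.mp hk)).trans hnN
    have hN : poch (-N) k ≠ 0 := by
      simp [poch_neg_natCast, Nat.descFactorial_eq_zero_iff_lt, hkN]
    rw [mul_div_mul_right _ _ hN, poch_neg_natCast, Nat.descFactorial_eq_factorial_mul_choose]
    field_simp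
    push_cast
    ring
  rw [kraw, sum_congr rfl hterm, ← add_pow]
  congr 1
  field_simp
  ring

lemma descFactorial_div_succ_succ {n N k : ℕ} (hkn : k ≤ n) (hnN : n ≤ N) :
    ((N : ℝ) + 1) * ((n + 1).descFactorial (k + 1) / (N + 1).descFactorial (k + 1) : ℝ)
      = (N - k) * (n.descFactorial (k + 1) / N.descFactorial (k + 1) : ℝ)
        + (k + 1) * (n.descFactorial k / N.descFactorial k : ℝ) := by
  have hN : (N.descFactorial k : ℝ) ≠ 0 := by
    simp [Nat.descFactorial_eq_zero_iff_lt, hkn.trans hnN]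
  simp only [Nat.succ_descFactorial_succ, Nat.descFactorial_succ]
  push_cast [hkn, hkn.trans hnN]
  rcases (hkn.trans hnN).lt_or_eq with hkN | rfl
  · have hNk : (N : ℝ) - k ≠ 0 := sub_ne_zero.mpr (by exact_mod_cast hkN.ne')
    field_simp
    ring
  · obtain rfl : k = n := le_antisymm hkn hnN
    field_simp
    ring

theorem kraw_succ_succ {n N : ℕ} (hnN : n ≤ N) {p : ℝ} (hp : p ≠ 0) (x : ℝ) :
    kraw (n + 1) x p (N + 1) =
      ((N + 1 - x) * kraw n x p N - (1 - p) / p * x * kraw n (x - 1) p N) / (N + 1) := by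
  simp only [kraw_eq_sum]
  rw [eq_div_iff (by positivity), mul_sum, mul_sum, ← sum_sub_distrib, sum_mul]
  set a : ℕ → ℝ := fun k => n.descFactorial k / N.descFactorial k with ha
  set F : ℕ → ℝ := fun k => (N + 1 - k) * a k * negChoose x k * (1 / p) ^ k with hF
  set G : ℕ → ℝ := fun k => (k + 1) * a k * negChoose x (k + 1) * (1 / p) ^ (k + 1) with hG
  have hright (k : ℕ) : (N + 1 - x) * (a k * negChoose x k * (1 / p) ^ k)
      - (1 - p) / p * x * (a k * negChoose (x - 1) k * (1 / p) ^ k) = F k + G k := by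
    linear_combination (a k * (1 / p) ^ k) * negChoose_contiguous hp (N + 1) x k
  have hleft : ∀ k ∈ range (n + 1),
      ((n + 1).descFactorial (k + 1) / (N + 1).descFactorial (k + 1) : ℝ) * negChoose x (k + 1)
        * (1 / p) ^ (k + 1) * (N + 1) = F (k + 1) + G k := by
    intro k hk
    have hcoeff := descFactorial_div_succ_succ (Nat.lt_succ_iff.mp (mem_range.mp hk)) hnN
    simp only [hF, hG, ha]
    push_cast
    linear_combination (negChoose x (k + 1) * (1 / p) ^ (k + 1)) * hcoeff
  have hsumF : ∑ k ∈ range (n + 1), F (k + 1) + F 0 = ∑ k ∈ range (n + 1), F k := by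
    have hF_last : F (n + 1) = 0 := by simp [hF, ha]
    rw [← sum_range_succ', sum_range_succ, hF_last, add_zero]
  rw [sum_congr rfl fun k _ => hright k, sum_add_distrib, sum_range_succ' _ (n + 1),
    sum_congr rfl hleft, sum_add_distrib, ← hsumF, add_right_comm, add_left_inj,
    add_left_cancel_iff]
  simp [hF, ha, negChoose_zero]

theorem kraw_symm {n N : ℕ} (hnN : n ≤ N) {p : ℝ} (hp0 : p ≠ 0) (hp1 : p ≠ 1) (x : ℝ) :
    kraw n x p N = ((p - 1) / p) ^ n * kraw n (N - x) (1 - p) N := by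
  induction n generalizing N x with
  | zero => simp [kraw_zero]
  | succ n ih =>
    obtain ⟨N, rfl⟩ : ∃ M, N = M + 1 := ⟨N - 1, by omega⟩
    have hnN' : n ≤ N := by omega
    have hq : 1 - p ≠ 0 := sub_ne_zero.mpr hp1.symm
    rw [kraw_succ_succ hnN' hp0, kraw_succ_succ hnN' hq, ih hnN' x, ih hnN' (x - 1)]
    push_cast
    rw [show (N : ℝ) + 1 - x - 1 = N - x by ring, show (N : ℝ) - (x - 1) = N + 1 - x by ring,
      show (N : ℝ) + 1 - (N + 1 - x) = x by ring, pow_succ]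
    set c := (p - 1) / p
    have h1 : c * x = -((1 - p) / p * x) := by
      simp only [c]
      field_simp
      ring
    have h2 : -(c * ((1 - (1 - p)) / (1 - p) * (N + 1 - x))) = N + 1 - x := by
      simp only [c]
      field_simp
      ring
    linear_combination (-(c ^ n * kraw n (N + 1 - x) (1 - p) N) / (N + 1)) * h1
      + (-(c ^ n * kraw n (N - x) (1 - p) N) / (N + 1)) * h2

theorem abs_kraw_succ_le {m N : ℕ} (hmN : m ≤ N) {p : ℝ} (hp0 : 0 < p) (hp1 : p ≤ 1) {x : ℝ}
    (hx0 : 0 ≤ x) (hxN : x ≤ N + 1) {C : ℝ} (hC0 : |kraw m x p N| ≤ C)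
    (hC1 : |kraw m (x - 1) p N| ≤ C) :
    |kraw (m + 1) x p (N + 1)| ≤ max 1 ((1 - p) / p) * C := by
  set w := (1 - p) / p
  have hw : 0 ≤ w := div_nonneg (by linarith) hp0.le
  have hN : (0 : ℝ) < N + 1 := by positivity
  have hC : 0 ≤ C := (abs_nonneg _).trans hC0
  have hweights : (N + 1 - x) + w * x ≤ max 1 w * (N + 1) := by
    nlinarith [mul_le_mul_of_nonneg_left (le_max_left 1 w) (by linarith : (0 : ℝ) ≤ N + 1 - x),
      mul_le_mul_of_nonneg_right (le_max_right 1 w) hx0]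
  rw [kraw_succ_succ hmN hp0.ne', abs_div, abs_of_pos hN, div_le_iff₀ hN]
  calc |(N + 1 - x) * kraw m x p N - w * x * kraw m (x - 1) p N|
      ≤ (N + 1 - x) * |kraw m x p N| + w * x * |kraw m (x - 1) p N| := by
        have := abs_sub ((N + 1 - x) * kraw m x p N) (w * x * kraw m (x - 1) p N)
        rwa [abs_mul, abs_mul, abs_of_nonneg (by linarith : (0 : ℝ) ≤ N + 1 - x),
          abs_of_nonneg (mul_nonneg hw hx0)] at this
    _ ≤ (N + 1 - x) * C + w * x * C := by gcongr
    _ ≤ max 1 w * C * (N + 1) := by nlinarith [mul_le_mul_of_nonneg_right hweights hC]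

lemma kraw_eq_one_sub_sum (n : ℕ) (x p : ℝ) (N : ℕ) :
    kraw n x p N = 1 - ∑ k ∈ range n, (n.descFactorial (k + 1) / N.descFactorial (k + 1) : ℝ)
      * (1 / p) ^ (k + 1) * (negChoose (x - 1) k - negChoose (x - 1) (k + 1)) := by
  rw [kraw_eq_sum, sum_range_succ', sub_eq_neg_add, ← sum_neg_distrib]
  congr 1
  · refine sum_congr rfl fun k _ => ?_
    rw [negChoose_succ]
    ring
  · simp [negChoose_zero]

lemma sum_mul_negChoose_sub_le {x B : ℝ} (hx0 : 0 ≤ x) (hx1 : x ≤ 1) (hB : 0 ≤ B) {n : ℕ}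
    {t : ℕ → ℝ} (ht1 : t 1 ≤ B) (ht : ∀ k, 2 ≤ k → k ≤ n → (n - 1 : ℝ) * t k ≤ n * B) :
    ∑ k ∈ range n, t (k + 1) * (negChoose (x - 1) k - negChoose (x - 1) (k + 1)) ≤ B := by
  set P := negChoose (x - 1)
  have hd (k : ℕ) : 0 ≤ P k - P (k + 1) := sub_nonneg.mpr (negChoose_sub_one_succ_le hx0 hx1 k)
  rcases n with _ | m
  · simpa using hB
  have htail : ∑ k ∈ range m, t (k + 2) * (P (k + 1) - P (k + 2)) ≤ (1 - x) * B := by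
    rcases m.eq_zero_or_pos with rfl | hm
    · simp [mul_nonneg (sub_nonneg.mpr hx1) hB]
    have hm' : (0 : ℝ) < m := by exact_mod_cast hm
    have hle : ∀ k ∈ range m, m * (t (k + 2) * (P (k + 1) - P (k + 2)))
        ≤ (m + 1) * B * (P (k + 1) - P (k + 2)) := by
      intro k hk
      have := ht (k + 2) (by omega) (by have := mem_range.mp hk; omega)
      push_cast at this
      rw [add_sub_cancel_right] at this
      nlinarith [hd (k + 1)]
    have htel : ∑ k ∈ range m, (P (k + 1) - P (k + 2)) = P 1 - P (m + 1) :=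
      sum_range_sub' (fun k => P (k + 1)) m
    have hPm := div_le_negChoose_sub_one hx1 (m + 1)
    rw [Nat.cast_succ, div_le_iff₀ (by positivity)] at hPm
    have hsum := sum_le_sum hle
    rw [← mul_sum, ← mul_sum, htel, show P 1 = 1 - x from negChoose_sub_one_one x] at hsum
    refine le_of_mul_le_mul_left ?_ hm'
    nlinarith
  rw [sum_range_succ']
  have h0 : t (0 + 1) * (P 0 - P (0 + 1)) ≤ x * B := by
    simp only [P, zero_add, negChoose_zero, negChoose_sub_one_one, sub_sub_cancel]
    nlinarith
  linarith

theorem Nat.two_pow_mul_descFactorial_le {m M : ℕ} (h : 2 * m ≤ M) (j : ℕ) :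
    2 ^ j * m.descFactorial j ≤ M.descFactorial j := by
  induction j with
  | zero => simp
  | succ j ih =>
    rw [Nat.descFactorial_succ, Nat.descFactorial_succ, pow_succ]
    calc 2 ^ j * 2 * ((m - j) * m.descFactorial j)
        = 2 * (m - j) * (2 ^ j * m.descFactorial j) := by ring
      _ ≤ (M - j) * M.descFactorial j := Nat.mul_le_mul (by omega) ih

theorem Nat.pred_mul_two_pow_mul_descFactorial_le {n N k : ℕ} (h2n : 2 * n ≤ N + 2)
    (hk : 2 ≤ k) :
    (n - 1) * (2 ^ k * n.descFactorial k) ≤ 2 * n * N.descFactorial k := by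
  obtain ⟨j, rfl⟩ : ∃ j, k = j + 2 := ⟨k - 2, by omega⟩
  rcases n with _ | _ | m
  · simp
  · simp
  obtain ⟨M, rfl⟩ : ∃ M, N = M + 2 := ⟨N - 2, by omega⟩
  have h := Nat.two_pow_mul_descFactorial_le (m := m) (M := M) (by omega) j
  have hsq : 4 * (m + 2) * (m + 1) * (m + 1) ≤ 2 * (m + 2) * (M + 2) * (M + 1) := by
    have : 2 * (m + 1) * (m + 1) ≤ (M + 2) * (M + 1) := by nlinarith
    nlinarith
  simp only [Nat.succ_descFactorial_succ, Nat.add_sub_cancel, pow_add]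
  nlinarith [Nat.mul_le_mul hsq h]

lemma pred_mul_descFactorial_div_mul_pow_le {n N k : ℕ} (hkN : k ≤ N) (h2n : 2 * n ≤ N + 2)
    (hk : 2 ≤ k) {u : ℝ} (hu : 0 ≤ u) :
    (n - 1 : ℝ) * (n.descFactorial k / N.descFactorial k * u ^ k) ≤ n * (2 * (u / 2) ^ k) := by
  rcases n with _ | n
  · simp [Nat.descFactorial_of_lt (by omega : 0 < k)]
  have hN : (0 : ℝ) < N.descFactorial k := by exact_mod_cast Nat.descFactorial_pos.mpr hkN
  have h : (n : ℝ) * (2 ^ k * (n + 1).descFactorial k) ≤ 2 * (n + 1) * N.descFactorial k := by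
    exact_mod_cast Nat.pred_mul_two_pow_mul_descFactorial_le h2n hk
  have hpow : u ^ k = 2 ^ k * (u / 2) ^ k := by rw [← mul_pow]; ring
  rw [hpow, Nat.cast_succ, add_sub_cancel_right, div_mul_eq_mul_div, mul_div_assoc',
    div_le_iff₀ hN]
  nlinarith [mul_le_mul_of_nonneg_right h (pow_nonneg (div_nonneg hu zero_le_two) k)]

lemma two_mul_one_add_div_two_pow_le {w : ℝ} (hw : 0 ≤ w) {k n : ℕ} (hkn : k ≤ n) :
    2 * ((1 + w) / 2) ^ k ≤ 1 + max 1 (w ^ n) := by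
  have h1 := le_max_left 1 (w ^ n)
  rcases le_total w 1 with hw1 | hw1
  · nlinarith [pow_le_one₀ (by positivity) (by linarith : (1 + w) / 2 ≤ 1) (n := k)]
  rcases k with _ | j
  · linarith
  have hconv := add_pow_le zero_le_one hw (j + 1)
  have hwn : w ^ (j + 1) ≤ w ^ n := pow_le_pow_right₀ hw1 hkn
  rw [one_pow, Nat.add_sub_cancel] at hconv
  rw [div_pow, pow_succ 2 j]
  have h2j : (0 : ℝ) < 2 ^ j := by positivity
  rw [mul_div_assoc', div_le_iff₀ (by positivity)]
  nlinarith [le_max_right 1 (w ^ n)]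

theorem abs_kraw_le_of_le_one {n N : ℕ} (hnN : n ≤ N) (h2n : 2 * n ≤ N + 2) {p : ℝ}
    (hp0 : 0 < p) (hp1 : p ≤ 1) {x : ℝ} (hx0 : 0 ≤ x) (hx1 : x ≤ 1) :
    |kraw n x p N| ≤ max 1 (((1 - p) / p) ^ n) := by
  set w := (1 - p) / p
  have hw : 0 ≤ w := div_nonneg (by linarith) hp0.le
  have hu : 1 / p = 1 + w := by
    simp only [w]
    field_simp
    ring
  set t : ℕ → ℝ := fun k => n.descFactorial k / N.descFactorial k * (1 / p) ^ k
  have ht1 : t 1 ≤ 1 + max 1 (w ^ n) := by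
    rcases n.eq_zero_or_pos with rfl | hn
    · simp [t]
    have hnN' : (n : ℝ) / N ≤ 1 := div_le_one_of_le₀ (by exact_mod_cast hnN) (by positivity)
    have := two_mul_one_add_div_two_pow_le hw hn
    simp only [t, Nat.descFactorial_one, pow_one, hu] at this ⊢
    nlinarith
  have ht : ∀ k, 2 ≤ k → k ≤ n → (n - 1 : ℝ) * t k ≤ n * (1 + max 1 (w ^ n)) := by
    intro k hk hkn
    calc (n - 1 : ℝ) * t k ≤ n * (2 * ((1 + w) / 2) ^ k) := by
          simp only [t, hu]
          exact pred_mul_descFactorial_div_mul_pow_le (hkn.trans hnN) h2n hk (by positivity)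
      _ ≤ n * (1 + max 1 (w ^ n)) := by
          gcongr
          exact two_mul_one_add_div_two_pow_le hw hkn
  have hsum := sum_mul_negChoose_sub_le hx0 hx1 (by positivity) ht1 ht
  have hnonneg : 0 ≤ ∑ k ∈ range n, t (k + 1) * (negChoose (x - 1) k - negChoose (x - 1) (k + 1)) :=
    sum_nonneg fun k _ => mul_nonneg (by positivity)
      (sub_nonneg.mpr (negChoose_sub_one_succ_le hx0 hx1 k))
  rw [kraw_eq_one_sub_sum, abs_le]
  constructor <;> linarith [le_max_left 1 (w ^ n)]

theorem abs_kraw_le_of_sub_le_one {n N : ℕ} (hnN : n ≤ N) (h2n : 2 * n ≤ N + 2) {p : ℝ}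
    (hp0 : 0 < p) (hp1 : p < 1) {x : ℝ} (hxN : x ≤ N) (hx1 : N - x ≤ 1) :
    |kraw n x p N| ≤ max 1 (((1 - p) / p) ^ n) := by
  have h := abs_kraw_le_of_le_one hnN h2n (p := 1 - p) (by linarith) (by linarith)
    (by linarith : (0 : ℝ) ≤ N - x) hx1
  rw [sub_sub_cancel] at h
  rw [kraw_symm hnN hp0.ne' hp1.ne, abs_mul, abs_pow, abs_div,
    abs_of_neg (by linarith : p - 1 < 0), abs_of_pos hp0, neg_sub]
  calc ((1 - p) / p) ^ n * |kraw n (N - x) (1 - p) N|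
      ≤ ((1 - p) / p) ^ n * max 1 ((p / (1 - p)) ^ n) := by
        gcongr
    _ = max 1 (((1 - p) / p) ^ n) := by
        have hq : 1 - p ≠ 0 := (sub_pos.mpr hp1).ne'
        have : (1 - p) / p * (p / (1 - p)) = 1 := by
          field_simp
        rw [mul_max_of_nonneg _ _ (by positivity), mul_one, ← mul_pow, this, one_pow, max_comm]

lemma max_one_mul_max_one_pow {w : ℝ} (hw : 0 ≤ w) (m : ℕ) :
    max 1 w * max 1 (w ^ m) = max 1 (w ^ (m + 1)) := by
  rcases le_total w 1 with h | h
  · simp [h, pow_le_one₀ hw h]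
  · rw [max_eq_right h, max_eq_right (one_le_pow₀ h), max_eq_right (one_le_pow₀ h), pow_succ']

theorem abs_kraw_le {n N : ℕ} (hnN : n ≤ N) (h2n : 2 * n ≤ N + 2) {p : ℝ} (hp0 : 0 < p)
    (hp1 : p < 1) {x : ℝ} (hx0 : 0 ≤ x) (hxN : x ≤ N) :
    |kraw n x p N| ≤ max 1 (((1 - p) / p) ^ n) := by
  induction n generalizing N x with
  | zero => simp [kraw_zero]
  | succ m ih =>
    rcases le_or_gt x 1 with hx1 | hx1
    · exact abs_kraw_le_of_le_one hnN h2n hp0 hp1.le hx0 hx1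
    rcases le_or_gt (N - x) 1 with hxN1 | hxN1
    · exact abs_kraw_le_of_sub_le_one hnN h2n hp0 hp1 hxN hxN1
    obtain ⟨N, rfl⟩ : ∃ M, N = M + 1 := ⟨N - 1, by omega⟩
    push_cast at hxN hxN1
    have hmN : m ≤ N := by omega
    rw [← max_one_mul_max_one_pow (div_nonneg (by linarith) hp0.le)]
    exact abs_kraw_succ_le hmN hp0 hp1.le hx0 hxN (ih hmN (by omega) hx0 (by linarith))
      (ih hmN (by omega) (by linarith) (by linarith))

theorem krawtchouk_bound (N : ℕ) (hN : 0 < N) (p : ℝ) (hp : p ∈ Set.Ioo (0 : ℝ) 1)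
    (n : ℕ) (hn : (n : ℝ) ≤ (N : ℝ) / 2 + 1) (x : ℝ) (hx : x ∈ Set.Icc (0 : ℝ) N) :
    |kraw n x p N| ≤ max 1 (((1 - p) / p) ^ n) ∧
      max 1 (((1 - p) / p) ^ n) = max |kraw n 0 p N| |kraw n (N : ℝ) p N| := by
  obtain ⟨hp0, hp1⟩ := hp
  have h2n : 2 * n ≤ N + 2 := by exact_mod_cast (by linarith : (2 * n : ℝ) ≤ N + 2)
  have hnN : n ≤ N := by omega
  refine ⟨abs_kraw_le hnN h2n hp0 hp1 hx.1 hx.2, ?_⟩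
  rw [kraw_eval_zero, kraw_eval_self hnN hp0.ne', abs_one, abs_pow, abs_div,
    abs_of_neg (by linarith : p - 1 < 0), abs_of_pos hp0, neg_sub]
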